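/- arXiv:1311.3016 — 3 statements merged into one kernel-verified Lean document; each statement's English description precedes it below -/
import Mathlib

section
/- Let μ be a probability measure on Ω_ℓ = Ω × R^ℓ with ℓ ≥ 1 and define S_z(ω, z_{1,ℓ}) = (T_{z₁}ω, (z_{2,ℓ}, z)) for z ∈ R. Then μ satisfies E^μ[max_{z∈R} f∘S_z] ≥ E^μ[f] for all bounded measurable f : Ω_ℓ → ℝ if and only if E^μ[f(ω, z_{1,ℓ−1})] = E^μ[f(T_{z₁}ω, z_{2,ℓ})] for all bounded measurable f : Ω × R^{ℓ−1} → ℝ. -/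
/-!
With `g(ω, z_{1,ℓ-1}) = max_z f(ω, z_{1,ℓ-1}, z)` one has `max_z f∘S_z = g(T_{z₁}ω, z_{2,ℓ})`
and `f ≤ g(ω, z_{1,ℓ-1})`, so the shift identity for `g` gives `S`-invariance. Conversely,
`S`-invariance applied to `±g(ω, z_{1,ℓ-1})`, on which the maximum over `z` acts trivially,
gives the shift identity.
-/

open MeasureTheory Finset

theorem Measurable.integrable_of_abs_le {α : Type*} [MeasurableSpace α] {μ : Measure α}
    [IsFiniteMeasure μ] {f : α → ℝ} (hf : Measurable f) {M : ℝ} (hM : ∀ x, |f x| ≤ M) :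
    Integrable f μ :=
  .of_bound hf.aestronglyMeasurable M (ae_of_all _ hM)

section FinSnoc

variable {X R : Type*} [MeasurableSpace X] [MeasurableSpace R] {m : ℕ}

theorem Measurable.finSnoc {f : X → Fin m → R} {g : X → R} (hf : Measurable f)
    (hg : Measurable g) : Measurable fun x => (Fin.snoc (f x) (g x) : Fin (m + 1) → R) := by
  refine measurable_pi_lambda _ fun i => ?_
  induction i using Fin.lastCases with
  | last => simpa only [Fin.snoc_last] using hg
  | cast i => simpa only [Fin.snoc_castSucc] using measurable_pi_iff.1 hf i

theorem Measurable.finInit {f : X → Fin (m + 1) → R} (hf : Measurable f) :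
    Measurable fun x => Fin.init (f x) :=
  measurable_pi_lambda _ fun _ => measurable_pi_iff.1 hf _

end FinSnoc

section SupLast

variable {α R : Type*} [Fintype R] [Nonempty R] {m : ℕ}

def supLast (f : α × (Fin (m + 1) → R) → ℝ) (p : α × (Fin m → R)) : ℝ :=
  univ.sup' univ_nonempty fun z => f (p.1, Fin.snoc p.2 z)

theorem le_supLast_init (f : α × (Fin (m + 1) → R) → ℝ) (η : α × (Fin (m + 1) → R)) :
    f η ≤ supLast f (η.1, Fin.init η.2) := by
  have h := le_sup' (fun z => f (η.1, Fin.snoc (Fin.init η.2) z)) (mem_univ (η.2 (Fin.last m)))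
  rwa [Fin.snoc_init_self] at h

theorem abs_supLast_le {f : α × (Fin (m + 1) → R) → ℝ} {M : ℝ} (hM : ∀ η, |f η| ≤ M)
    (p : α × (Fin m → R)) : |supLast f p| ≤ M := by
  obtain ⟨z⟩ := ‹Nonempty R›
  refine abs_le.2 ⟨?_, sup'_le _ _ fun _ _ => (abs_le.1 (hM _)).2⟩
  exact (abs_le.1 (hM _)).1.trans (le_sup' (fun z => f (p.1, Fin.snoc p.2 z)) (mem_univ z))

theorem measurable_supLast [MeasurableSpace α] [MeasurableSpace R]
    {f : α × (Fin (m + 1) → R) → ℝ} (hf : Measurable f) : Measurable (supLast f) := by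
  have hsup := Finset.measurable_sup' univ_nonempty fun z _ =>
    hf.comp (measurable_fst.prodMk (measurable_snd.finSnoc (measurable_const (a := z))))
  convert hsup using 1
  funext p
  simp only [supLast, Finset.sup'_apply, Function.comp_apply]

end SupLast

theorem stmt_8_general {Ω R : Type*} [MeasurableSpace Ω]
    [Fintype R] [Nonempty R] [MeasurableSpace R]
    (T : R → Ω → Ω) (m : ℕ)
    (μ : Measure (Ω × (Fin (m + 1) → R))) [IsProbabilityMeasure μ] :
    (∀ f : Ω × (Fin (m + 1) → R) → ℝ, Measurable f → (∃ M, ∀ η, |f η| ≤ M) →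
        ∫ η, f η ∂μ ≤ ∫ η, Finset.univ.sup' Finset.univ_nonempty
          (fun z => f (T (η.2 0) η.1, Fin.snoc (fun i => η.2 i.succ) z)) ∂μ)
    ↔ (∀ g : Ω × (Fin m → R) → ℝ, Measurable g → (∃ M, ∀ η, |g η| ≤ M) →
        ∫ η, g (η.1, Fin.init η.2) ∂μ
          = ∫ η, g (T (η.2 0) η.1, fun i => η.2 i.succ) ∂μ) := by
  have hinit : Measurable fun η : Ω × (Fin (m + 1) → R) => (η.1, Fin.init η.2) :=
    measurable_fst.prodMk measurable_snd.finInit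
  constructor
  · rintro h g hg ⟨M, hM⟩
    have hle := h (fun η => g (η.1, Fin.init η.2)) (hg.comp hinit) ⟨M, fun η => hM _⟩
    have hge := h (fun η => -g (η.1, Fin.init η.2)) (hg.comp hinit).neg
      ⟨M, fun η => by simpa only [abs_neg] using hM _⟩
    simp only [Fin.init_snoc, sup'_const, integral_neg] at hle hge
    linarith
  · rintro h f hf ⟨M, hM⟩
    calc ∫ η, f η ∂μ ≤ ∫ η, supLast f (η.1, Fin.init η.2) ∂μ :=
          integral_mono (hf.integrable_of_abs_le hM)
            (((measurable_supLast hf).comp hinit).integrable_of_abs_le fun _ => abs_supLast_le hM _)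
            (le_supLast_init f)
      _ = ∫ η, supLast f (T (η.2 0) η.1, fun i => η.2 i.succ) ∂μ :=
          h _ (measurable_supLast hf) ⟨M, abs_supLast_le hM⟩

/-- Lemma 7.2: for `ℓ = m+1 ≥ 1`, a probability measure `μ` on `Ω × R^ℓ` is
`S`-invariant (`E^μ[max_z f∘S_z] ≥ E^μ[f]` for all bounded measurable `f`)
iff `E^μ[f(ω, z_{1,ℓ−1})] = E^μ[f(T_{z₁}ω, z_{2,ℓ})]` for all bounded measurable `f`. -/
theorem stmt_8 {Ω R : Type*} [MeasurableSpace Ω]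
    [Fintype R] [Nonempty R] [MeasurableSpace R] [MeasurableSingletonClass R]
    (T : R → Ω → Ω) (hT : ∀ z, Measurable (T z)) (m : ℕ)
    (μ : Measure (Ω × (Fin (m + 1) → R))) [IsProbabilityMeasure μ] :
    (∀ f : Ω × (Fin (m + 1) → R) → ℝ, Measurable f → (∃ M, ∀ η, |f η| ≤ M) →
        ∫ η, f η ∂μ ≤ ∫ η, Finset.univ.sup' Finset.univ_nonempty
          (fun z => f (T (η.2 0) η.1, Fin.snoc (fun i => η.2 i.succ) z)) ∂μ)
    ↔ (∀ g : Ω × (Fin m → R) → ℝ, Measurable g → (∃ M, ∀ η, |g η| ≤ M) →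
        ∫ η, g (η.1, Fin.init η.2) ∂μ
          = ∫ η, g (T (η.2 0) η.1, fun i => η.2 i.succ) ∂μ) :=
  stmt_8_general T m μ
end

section
/- Let μ be a probability measure on Ω_ℓ with ℓ ≥ 1. If μ is S-invariant (E^μ[max_{z∈R} f∘S_z] ≥ E^μ[f] for all bounded measurable f), then μ is invariant under the Markov kernel q((ω,z_{1,ℓ}), (T_{z₁}ω, z_{2,ℓ}, z)) = μ_ℓ(z | T_{z₁}ω, z_{2,ℓ}), where μ_ℓ(·|ω,z_{1,ℓ−1}) is the conditional distribution of Z_ℓ under μ given (ω, z_{1,ℓ−1}). -/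
/-!
Average `f` over the last step with the conditional law `κ`: by the defining property of `κ`
the average `g` has the same integral as `f`, and `g` does not depend on the last coordinate,
so `z ↦ g (S_z η)` is constant. Hence `S`-invariance applied to `g` and to `-g` is an equality,
and `g ∘ S_z` is exactly the integrand of `q`.
-/

open MeasureTheory Finset

theorem measurable_fin_init {β : Type*} [MeasurableSpace β] {n : ℕ} :
    Measurable (Fin.init : (Fin (n + 1) → β) → (Fin n → β)) := by
  unfold Fin.init
  fun_prop

theorem measurable_fin_snoc_const {β : Type*} [MeasurableSpace β] {n : ℕ} (b : β) :
    Measurable (fun x : Fin n → β => (Fin.snoc x b : Fin (n + 1) → β)) := by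
  refine measurable_pi_lambda _ fun i => Fin.lastCases ?_ (fun j => ?_) i
  · simp
  · simpa using measurable_pi_apply j

theorem integral_eq_of_le_integral_sup'_of_comp_eq {X R : Type*} [MeasurableSpace X]
    [Fintype R] [Nonempty R] {μ : Measure X} {S : R → X → X}
    (hS : ∀ f : X → ℝ, Measurable f → (∃ M, ∀ x, |f x| ≤ M) →
      ∫ x, f x ∂μ ≤ ∫ x, univ.sup' univ_nonempty (fun z => f (S z x)) ∂μ)
    {g G : X → ℝ} (hg : Measurable g) (hgM : ∃ M, ∀ x, |g x| ≤ M)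
    (hgG : ∀ z x, g (S z x) = G x) :
    ∫ x, g x ∂μ = ∫ x, G x ∂μ := by
  have hle := hS g hg hgM
  have hge := hS (fun x => -g x) hg.neg (by simpa only [abs_neg] using hgM)
  simp only [hgG, sup'_const, integral_neg] at hle hge
  linarith

section LastStepAverage

variable {Ω R : Type*} [Fintype R] {m : ℕ}

def lastStepAverage (κ : Ω × (Fin m → R) → R → ℝ) (f : Ω × (Fin (m + 1) → R) → ℝ)
    (η : Ω × (Fin m → R)) : ℝ :=
  ∑ z, κ η z * f (η.1, Fin.snoc η.2 z)

theorem measurable_lastStepAverage [MeasurableSpace Ω] [MeasurableSpace R] {κ : Ω × (Fin m → R) → R → ℝ}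
    {f : Ω × (Fin (m + 1) → R) → ℝ} (hκ : ∀ z, Measurable fun η => κ η z)
    (hf : Measurable f) : Measurable (lastStepAverage κ f) :=
  Finset.measurable_sum _ fun z _ => (hκ z).mul <|
    hf.comp (measurable_fst.prodMk ((measurable_fin_snoc_const z).comp measurable_snd))

theorem abs_lastStepAverage_le {κ : Ω × (Fin m → R) → R → ℝ}
    {f : Ω × (Fin (m + 1) → R) → ℝ} {M : ℝ} (hκ0 : ∀ η z, 0 ≤ κ η z)
    (hκ1 : ∀ η, ∑ z, κ η z = 1) (hM : ∀ η, |f η| ≤ M) (η : Ω × (Fin m → R)) :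
    |lastStepAverage κ f η| ≤ M :=
  calc |lastStepAverage κ f η| ≤ ∑ z, |κ η z * f (η.1, Fin.snoc η.2 z)| :=
        abs_sum_le_sum_abs _ _
    _ ≤ ∑ z, κ η z * M := sum_le_sum fun z _ => by
        rw [abs_mul, abs_of_nonneg (hκ0 η z)]
        exact mul_le_mul_of_nonneg_left (hM _) (hκ0 η z)
    _ = M := by rw [← sum_mul, hκ1, one_mul]

end LastStepAverage

theorem stmt_9_general {Ω R : Type*} [MeasurableSpace Ω]
    [Fintype R] [Nonempty R] [MeasurableSpace R]
    (T : R → Ω → Ω) (m : ℕ)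
    (μ : Measure (Ω × (Fin (m + 1) → R)))
    (κ : Ω × (Fin m → R) → R → ℝ)
    (hκm : ∀ z, Measurable (fun η => κ η z))
    (hκ0 : ∀ η z, 0 ≤ κ η z) (hκ1 : ∀ η, ∑ z : R, κ η z = 1)
    (hcond : ∀ f : Ω × (Fin (m + 1) → R) → ℝ, Measurable f → (∃ M, ∀ η, |f η| ≤ M) →
        ∫ η, f η ∂μ = ∫ η, ∑ z : R,
          κ (η.1, Fin.init η.2) z * f (η.1, Fin.snoc (Fin.init η.2) z) ∂μ)
    (hSinv : ∀ f : Ω × (Fin (m + 1) → R) → ℝ, Measurable f → (∃ M, ∀ η, |f η| ≤ M) →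
        ∫ η, f η ∂μ ≤ ∫ η, Finset.univ.sup' Finset.univ_nonempty
          (fun z => f (T (η.2 0) η.1, Fin.snoc (fun i => η.2 i.succ) z)) ∂μ) :
    ∀ f : Ω × (Fin (m + 1) → R) → ℝ, Measurable f → (∃ M, ∀ η, |f η| ≤ M) →
      ∫ η, f η ∂μ = ∫ η, ∑ z : R,
        κ (T (η.2 0) η.1, fun i => η.2 i.succ) z *
          f (T (η.2 0) η.1, Fin.snoc (fun i => η.2 i.succ) z) ∂μ := by
  rintro f hf ⟨M, hM⟩
  let g : Ω × (Fin (m + 1) → R) → ℝ := fun η => lastStepAverage κ f (η.1, Fin.init η.2)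
  have hg : Measurable g := (measurable_lastStepAverage hκm hf).comp
    (measurable_fst.prodMk (measurable_fin_init.comp measurable_snd))
  calc ∫ η, f η ∂μ = ∫ η, g η ∂μ := hcond f hf ⟨M, hM⟩
    _ = _ := integral_eq_of_le_integral_sup'_of_comp_eq hSinv hg
        ⟨M, fun η => abs_lastStepAverage_le hκ0 hκ1 hM _⟩
        fun z η => by simp only [g, Fin.init_snoc, lastStepAverage]

/-- Lemma 7.6 (i)⇒(ii) for `ℓ = m+1 ≥ 1`: an `S`-invariant probability measure `μ`
on `Ω × R^ℓ` is invariant under the Markov kernel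
`q((ω,z_{1,ℓ}),(T_{z₁}ω, z_{2,ℓ}, z)) = μ_ℓ(z | T_{z₁}ω, z_{2,ℓ})` built from the
conditional distribution `κ = μ_ℓ(·|ω, z_{1,ℓ−1})` of the last step. -/
theorem stmt_9 {Ω R : Type*} [MeasurableSpace Ω]
    [Fintype R] [Nonempty R] [MeasurableSpace R] [MeasurableSingletonClass R]
    (T : R → Ω → Ω) (hT : ∀ z, Measurable (T z)) (m : ℕ)
    (μ : Measure (Ω × (Fin (m + 1) → R))) [IsProbabilityMeasure μ]
    (κ : Ω × (Fin m → R) → R → ℝ)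
    (hκm : ∀ z, Measurable (fun η => κ η z))
    (hκ0 : ∀ η z, 0 ≤ κ η z) (hκ1 : ∀ η, ∑ z : R, κ η z = 1)
    (hcond : ∀ f : Ω × (Fin (m + 1) → R) → ℝ, Measurable f → (∃ M, ∀ η, |f η| ≤ M) →
        ∫ η, f η ∂μ = ∫ η, ∑ z : R,
          κ (η.1, Fin.init η.2) z * f (η.1, Fin.snoc (Fin.init η.2) z) ∂μ)
    (hSinv : ∀ f : Ω × (Fin (m + 1) → R) → ℝ, Measurable f → (∃ M, ∀ η, |f η| ≤ M) →
        ∫ η, f η ∂μ ≤ ∫ η, Finset.univ.sup' Finset.univ_nonempty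
          (fun z => f (T (η.2 0) η.1, Fin.snoc (fun i => η.2 i.succ) z)) ∂μ) :
    ∀ f : Ω × (Fin (m + 1) → R) → ℝ, Measurable f → (∃ M, ∀ η, |f η| ≤ M) →
      ∫ η, f η ∂μ = ∫ η, ∑ z : R,
        κ (T (η.2 0) η.1, fun i => η.2 i.succ) z *
          f (T (η.2 0) η.1, Fin.snoc (fun i => η.2 i.succ) z) ∂μ :=
  stmt_9_general T m μ κ hκm hκ0 hκ1 hcond hSinv
end

section
/- For a probability measure μ on a finite set Ω and the uniform kernel p(ω,ω') = |R|^{-1} ∑_{z∈R} 1{T_zω = ω'}, the Donsker–Varadhan identity holds: inf_{q: μq=μ} H(μ×q | μ×p) = sup_{f:Ω→ℝ} { E^μ[f] − E^μ[ log ∑_{z∈R} |R|^{-1} e^{f(T_zω)} ] }. -/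
/-!
For a Markov kernel `p` and a potential `g`, tilting `p` by `e^g` gives a Markov kernel
`p_g(ω, ω') = p(ω, ω') e^{g ω'} / Z_g(ω)`, and for every kernel `q ≪ p`
`Φ(g) = H(μ×q | μ×p) - H(μ×q | μ×p_g) + ⟨μ - μq, g⟩`.
For `μ`-stationary `q` the last term vanishes, so Gibbs' inequality gives `Φ(g) ≤ H(μ×q | μ×p)`.
Conversely, suppose `Φ ≤ s` but no stationary `q ≪ p` has entropy `≤ s`. Then `(s, μ)` lies outside
the set of pairs `(x, μq)` with `H(μ×q | μ×p) ≤ x`, which is convex because the entropy is, and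
closed because the kernels `q ≪ p` form a compact set on which the entropy is continuous.
Hahn–Banach separation, suitably normalised, yields `f` with `s < H(μ×q | μ×p) + ⟨μq - μ, f⟩` for
all `q ≪ p`; at `q = p_{-f}` the identity above turns this into `s < Φ(-f)`.
-/

open Finset Matrix Real
open scoped Pointwise

noncomputable section

namespace DonskerVaradhan

section RelEntropy

variable {ι : Type*} [Fintype ι]

/-- Terms with `b i = 0` contribute `a i * log 0 = 0`, so this is the relative entropy only
when `a ≪ b`. -/
def relEntropy (a b : ι → ℝ) : ℝ := ∑ i, a i * log (a i / b i)

lemma sub_le_mul_log_div {a b : ℝ} (ha : 0 ≤ a) (hb : 0 ≤ b) (hab : b = 0 → a = 0) :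
    a - b ≤ a * log (a / b) := by
  rcases ha.eq_or_lt with rfl | ha
  · simpa using hb
  have hb : 0 < b := hb.lt_of_ne' fun h => ha.ne' (hab h)
  calc a - b = a * (1 - (a / b)⁻¹) := by field_simp
    _ ≤ a * log (a / b) :=
      mul_le_mul_of_nonneg_left (one_sub_inv_le_log_of_pos (by positivity)) ha.le

lemma relEntropy_nonneg {a b : ι → ℝ} (ha : 0 ≤ a) (hb : 0 ≤ b) (hab : ∀ i, b i = 0 → a i = 0)
    (hsum : ∑ i, b i ≤ ∑ i, a i) : 0 ≤ relEntropy a b :=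
  calc 0 ≤ ∑ i, (a i - b i) := by rw [sum_sub_distrib]; linarith
    _ ≤ relEntropy a b := sum_le_sum fun i _ => sub_le_mul_log_div (ha i) (hb i) (hab i)

@[simp]
lemma relEntropy_self (a : ι → ℝ) : relEntropy a a = 0 := by
  simp [relEntropy]

end RelEntropy

lemma mul_log_div_eq {c : ℝ} (hc : c ≠ 0) (t : ℝ) : t * log (t / c) = t * log t - log c * t := by
  rcases eq_or_ne t 0 with rfl | ht
  · simp
  · rw [log_div ht hc]; ring

lemma convexOn_mul_log_div (c : ℝ) : ConvexOn ℝ (Set.Ici 0) fun t : ℝ => t * log (t / c) := by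
  rcases eq_or_ne c 0 with rfl | hc
  · simpa using convexOn_const (0 : ℝ) (convex_Ici (0 : ℝ))
  simp_rw [mul_log_div_eq hc]
  exact convexOn_mul_log.sub ((LinearMap.lsmul ℝ ℝ (log c)).concaveOn (convex_Ici 0))

lemma continuous_mul_log_div (c : ℝ) : Continuous fun t : ℝ => t * log (t / c) := by
  rcases eq_or_ne c 0 with rfl | hc
  · simpa using continuous_const
  simp_rw [mul_log_div_eq hc]
  exact continuous_mul_log.sub (continuous_const.mul continuous_id)

section Kernels

variable {Ω : Type*} [Fintype Ω]

/-- `H(μ × q | μ × p)`. -/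
def condRelEntropy (μ : Ω → ℝ) (q p : Matrix Ω Ω ℝ) : ℝ :=
  μ ⬝ᵥ fun ω => relEntropy (q ω) (p ω)

def AbsCont (q p : Matrix Ω Ω ℝ) : Prop := ∀ ω ω', p ω ω' = 0 → q ω ω' = 0

def partitionFn (p : Matrix Ω Ω ℝ) (g : Ω → ℝ) : Ω → ℝ := p *ᵥ fun ω' => exp (g ω')

def dvFunctional (μ : Ω → ℝ) (p : Matrix Ω Ω ℝ) (g : Ω → ℝ) : ℝ :=
  μ ⬝ᵥ g - μ ⬝ᵥ fun ω => log (partitionFn p g ω)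

def gibbsKernel (p : Matrix Ω Ω ℝ) (g : Ω → ℝ) : Matrix Ω Ω ℝ :=
  fun ω ω' => p ω ω' * exp (g ω') / partitionFn p g ω

lemma continuous_condRelEntropy (μ : Ω → ℝ) (p : Matrix Ω Ω ℝ) :
    Continuous fun q => condRelEntropy μ q p :=
  continuous_finsetSum _ fun ω _ => continuous_const.mul <| continuous_finsetSum _
    fun ω' _ => (continuous_mul_log_div (p ω ω')).comp (by fun_prop)

variable [DecidableEq Ω] {μ : Ω → ℝ} {p q : Matrix Ω Ω ℝ}

def absContKernels (p : Matrix Ω Ω ℝ) : Set (Matrix Ω Ω ℝ) :=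
  (rowStochastic ℝ Ω : Set (Matrix Ω Ω ℝ)) ∩ {q | AbsCont q p}

lemma condRelEntropy_nonneg (hμ : 0 ≤ μ) (hq : q ∈ rowStochastic ℝ Ω)
    (hp : p ∈ rowStochastic ℝ Ω) (hqp : AbsCont q p) : 0 ≤ condRelEntropy μ q p :=
  dotProduct_nonneg_of_nonneg hμ fun ω =>
    relEntropy_nonneg (fun _ => nonneg_of_mem_rowStochastic hq)
      (fun _ => nonneg_of_mem_rowStochastic hp) (hqp ω)
      (by rw [sum_row_of_mem_rowStochastic hp, sum_row_of_mem_rowStochastic hq])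

lemma partitionFn_pos (hp : p ∈ rowStochastic ℝ Ω) (g : Ω → ℝ) (ω : Ω) :
    0 < partitionFn p g ω := by
  obtain ⟨ω', hω'⟩ : ∃ ω', p ω ω' ≠ 0 := by
    by_contra! h
    simpa [h] using sum_row_of_mem_rowStochastic hp ω
  exact sum_pos' (fun _ _ => mul_nonneg (nonneg_of_mem_rowStochastic hp) (exp_pos _).le)
    ⟨ω', mem_univ _, mul_pos ((nonneg_of_mem_rowStochastic hp).lt_of_ne' hω') (exp_pos _)⟩

lemma gibbsKernel_mem_rowStochastic (hp : p ∈ rowStochastic ℝ Ω) (g : Ω → ℝ) :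
    gibbsKernel p g ∈ rowStochastic ℝ Ω := by
  rw [mem_rowStochastic_iff_sum]
  refine ⟨fun ω ω' => div_nonneg (mul_nonneg (nonneg_of_mem_rowStochastic hp) (exp_pos _).le)
    (partitionFn_pos hp g ω).le, fun ω => ?_⟩
  simp only [gibbsKernel, ← sum_div]
  exact div_self (partitionFn_pos hp g ω).ne'

lemma gibbsKernel_eq_zero_iff (hp : p ∈ rowStochastic ℝ Ω) {g : Ω → ℝ} {ω ω' : Ω} :
    gibbsKernel p g ω ω' = 0 ↔ p ω ω' = 0 := by
  simp [gibbsKernel, (partitionFn_pos hp g ω).ne']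

lemma absCont_gibbsKernel_iff (hp : p ∈ rowStochastic ℝ Ω) {g : Ω → ℝ} :
    AbsCont q (gibbsKernel p g) ↔ AbsCont q p := by
  simp only [AbsCont, gibbsKernel_eq_zero_iff hp]

lemma gibbsKernel_mem_absContKernels (hp : p ∈ rowStochastic ℝ Ω) (g : Ω → ℝ) :
    gibbsKernel p g ∈ absContKernels p :=
  ⟨gibbsKernel_mem_rowStochastic hp g, fun _ _ => (gibbsKernel_eq_zero_iff hp).2⟩

lemma relEntropy_gibbsKernel (hp : p ∈ rowStochastic ℝ Ω) (hq : q ∈ rowStochastic ℝ Ω)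
    (hqp : AbsCont q p) (g : Ω → ℝ) (ω : Ω) :
    relEntropy (q ω) (gibbsKernel p g ω) =
      relEntropy (q ω) (p ω) - (q *ᵥ g) ω + log (partitionFn p g ω) := by
  have hZ := (partitionFn_pos hp g ω).ne'
  have hterm : ∀ ω', q ω ω' * log (q ω ω' / gibbsKernel p g ω ω') =
      q ω ω' * log (q ω ω' / p ω ω') - q ω ω' * g ω' + q ω ω' * log (partitionFn p g ω) := by
    intro ω'
    by_cases hq0 : q ω ω' = 0
    · simp [hq0]
    have hp0 : p ω ω' ≠ 0 := fun h => hq0 (hqp ω ω' h)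
    rw [gibbsKernel, log_div hq0 (div_ne_zero (mul_ne_zero hp0 (exp_ne_zero _)) hZ),
      log_div (mul_ne_zero hp0 (exp_ne_zero _)) hZ, log_mul hp0 (exp_ne_zero _), log_exp,
      log_div hq0 hp0]
    ring
  simp only [relEntropy, hterm, sum_add_distrib, sum_sub_distrib, ← sum_mul,
    sum_row_of_mem_rowStochastic hq, one_mul]
  rfl

lemma dvFunctional_eq (hp : p ∈ rowStochastic ℝ Ω) (hq : q ∈ rowStochastic ℝ Ω)
    (hqp : AbsCont q p) (μ g : Ω → ℝ) :
    dvFunctional μ p g =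
      condRelEntropy μ q p - condRelEntropy μ q (gibbsKernel p g) + (μ - μ ᵥ* q) ⬝ᵥ g := by
  have hrow : (fun ω => relEntropy (q ω) (gibbsKernel p g ω)) =
      (fun ω => relEntropy (q ω) (p ω)) - q *ᵥ g + fun ω => log (partitionFn p g ω) :=
    funext (relEntropy_gibbsKernel hp hq hqp g)
  rw [dvFunctional, condRelEntropy, condRelEntropy, hrow, dotProduct_add, dotProduct_sub,
    dotProduct_mulVec, sub_dotProduct]
  ring

lemma dvFunctional_le_condRelEntropy (hμ : 0 ≤ μ) (hp : p ∈ rowStochastic ℝ Ω)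
    (hq : q ∈ rowStochastic ℝ Ω) (hqp : AbsCont q p) (hμq : μ ᵥ* q = μ) (g : Ω → ℝ) :
    dvFunctional μ p g ≤ condRelEntropy μ q p := by
  have := condRelEntropy_nonneg hμ hq (gibbsKernel_mem_rowStochastic hp g)
    ((absCont_gibbsKernel_iff hp).2 hqp)
  rw [dvFunctional_eq hp hq hqp, hμq, sub_self, zero_dotProduct]
  linarith

lemma dvFunctional_eq_gibbsKernel (hp : p ∈ rowStochastic ℝ Ω) (μ g : Ω → ℝ) :
    dvFunctional μ p g =
      condRelEntropy μ (gibbsKernel p g) p + (μ - μ ᵥ* gibbsKernel p g) ⬝ᵥ g := by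
  obtain ⟨hq, hqp⟩ := gibbsKernel_mem_absContKernels hp g
  simp [dvFunctional_eq hp hq hqp, condRelEntropy]

lemma isClosed_rowStochastic {R : Type*} [Semiring R] [PartialOrder R] [IsOrderedRing R]
    [TopologicalSpace R] [OrderClosedTopology R] [IsTopologicalSemiring R] :
    IsClosed (rowStochastic R Ω : Set (Matrix Ω Ω R)) := by
  change IsClosed {M : Matrix Ω Ω R | (∀ i j, 0 ≤ M i j) ∧ M *ᵥ 1 = 1}
  simp only [Set.ofPred_and, Set.ofPred_forall]
  exact (isClosed_iInter fun i => isClosed_iInter fun j =>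
    isClosed_le continuous_const (continuous_id.matrix_elem i j)).inter
    (isClosed_eq (continuous_id.matrix_mulVec continuous_const) continuous_const)

lemma isCompact_absContKernels (p : Matrix Ω Ω ℝ) : IsCompact (absContKernels p) := by
  have hclosed : IsClosed (absContKernels p) := by
    simp only [absContKernels, AbsCont, Set.ofPred_forall]
    exact isClosed_rowStochastic.inter (isClosed_iInter fun ω => isClosed_iInter fun ω' =>
      isClosed_iInter fun _ => isClosed_eq (continuous_id.matrix_elem ω ω') continuous_const)
  refine (isCompact_univ_pi fun _ => isCompact_univ_pi fun _ => isCompact_Icc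
    (a := (0 : ℝ)) (b := 1)).of_isClosed_subset hclosed fun q hq ω _ ω' _ => ?_
  exact ⟨nonneg_of_mem_rowStochastic hq.1, le_one_of_mem_rowStochastic hq.1⟩

lemma convex_absContKernels (p : Matrix Ω Ω ℝ) : Convex ℝ (absContKernels p) :=
  convex_rowStochastic.inter fun q₁ h₁ q₂ h₂ a b _ _ _ ω ω' h => by
    simp [h₁ ω ω' h, h₂ ω ω' h]

lemma convexOn_condRelEntropy (hμ : 0 ≤ μ) (p : Matrix Ω Ω ℝ) :
    ConvexOn ℝ (absContKernels p) fun q => condRelEntropy μ q p := by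
  refine ⟨convex_absContKernels p, fun q₁ hq₁ q₂ hq₂ a b ha hb hab => ?_⟩
  simp only [condRelEntropy, relEntropy, dotProduct, smul_eq_mul, Matrix.add_apply,
    Matrix.smul_apply, mul_sum, ← sum_add_distrib]
  refine sum_le_sum fun ω _ => sum_le_sum fun ω' _ => ?_
  have hconv := (convexOn_mul_log_div (p ω ω')).2
    (nonneg_of_mem_rowStochastic (i := ω) (j := ω') hq₁.1)
    (nonneg_of_mem_rowStochastic (i := ω) (j := ω') hq₂.1) ha hb hab
  simp only [smul_eq_mul] at hconv
  calc _ ≤ μ ω * (a * (q₁ ω ω' * log (q₁ ω ω' / p ω ω'))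
          + b * (q₂ ω ω' * log (q₂ ω ω' / p ω ω'))) := mul_le_mul_of_nonneg_left hconv (hμ ω)
    _ = _ := by ring

def entropyEpigraph (μ : Ω → ℝ) (p : Matrix Ω Ω ℝ) : Set (ℝ × (Ω → ℝ)) :=
  {x | ∃ q ∈ absContKernels p, condRelEntropy μ q p ≤ x.1 ∧ μ ᵥ* q = x.2}

lemma convex_entropyEpigraph (hμ : 0 ≤ μ) (p : Matrix Ω Ω ℝ) :
    Convex ℝ (entropyEpigraph μ p) := by
  rintro ⟨x₁, ν₁⟩ ⟨q₁, hq₁, hx₁, rfl⟩ ⟨x₂, ν₂⟩ ⟨q₂, hq₂, hx₂, rfl⟩ a b ha hb hab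
  refine ⟨a • q₁ + b • q₂, convex_absContKernels p hq₁ hq₂ ha hb hab, ?_, ?_⟩
  · calc condRelEntropy μ (a • q₁ + b • q₂) p
        ≤ a • condRelEntropy μ q₁ p + b • condRelEntropy μ q₂ p :=
          (convexOn_condRelEntropy hμ p).2 hq₁ hq₂ ha hb hab
      _ ≤ a * x₁ + b * x₂ := by simp only [smul_eq_mul]; gcongr
  · simp [vecMul_add, vecMul_smul]

lemma isClosed_entropyEpigraph (μ : Ω → ℝ) (p : Matrix Ω Ω ℝ) :
    IsClosed (entropyEpigraph μ p) := by
  set F := fun q : Matrix Ω Ω ℝ => (condRelEntropy μ q p, μ ᵥ* q)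
  have hF : Continuous F := (continuous_condRelEntropy μ p).prodMk (by fun_prop)
  have hsum : entropyEpigraph μ p =
      F '' absContKernels p + Set.Ici (0 : ℝ) ×ˢ ({0} : Set (Ω → ℝ)) := by
    ext ⟨x, ν⟩
    simp only [entropyEpigraph, Set.mem_ofPred_eq, Set.mem_add, Set.mem_image, Set.mem_prod,
      Set.mem_Ici, Set.mem_singleton_iff, Prod.exists, Prod.mk_add_mk, Prod.mk.injEq, F]
    constructor
    · rintro ⟨q, hq, hx, rfl⟩
      exact ⟨_, _, ⟨q, hq, rfl, rfl⟩, x - condRelEntropy μ q p, 0, ⟨sub_nonneg.2 hx, rfl⟩,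
        add_sub_cancel _ _, add_zero _⟩
    · rintro ⟨_, _, ⟨q, hq, rfl, rfl⟩, t, _, ⟨ht, rfl⟩, rfl, rfl⟩
      exact ⟨q, hq, le_add_of_nonneg_right ht, (add_zero _).symm⟩
  rw [hsum]
  exact (isClosed_Ici.prod isClosed_singleton).add_left_of_isCompact
    ((isCompact_absContKernels p).image hF)

/-- Normalises a functional `(x, ν) ↦ β x + ℓ ν` separating `(s, μ)` from the pairs
`(h i + t, ν i)` so that its first coefficient becomes positive. -/
lemma exists_pos_mul_lt_of_separated {α : Type*} {K : Set α} {h b : α → ℝ}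
    (hh : ∀ i ∈ K, 0 ≤ h i) {s β u : ℝ} (hsu : s * β < u)
    (hu : ∀ i ∈ K, ∀ t : ℝ, 0 ≤ t → u < (h i + t) * β + b i) :
    ∃ c > 0, ∀ i ∈ K, s * c < h i * c + b i := by
  rcases lt_trichotomy β 0 with hβ | rfl | hβ
  · refine ⟨1, one_pos, fun i hi => absurd (hu i hi (|u - b i| / -β)
      (div_nonneg (abs_nonneg _) (neg_nonneg.2 hβ.le))) ?_⟩
    have ht : |u - b i| / -β * β = -|u - b i| := by rw [div_neg, neg_mul, div_mul_cancel₀ _ hβ.ne]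
    nlinarith [neg_abs_le (u - b i), mul_nonpos_of_nonneg_of_nonpos (hh i hi) hβ.le]
  · have hu0 : 0 < u := by simpa using hsu
    refine ⟨u / (|s| + 1), by positivity, fun i hi => ?_⟩
    have hbi : u < b i := by simpa using hu i hi 0 le_rfl
    have hsc : s * (u / (|s| + 1)) < u := by
      rw [← mul_div_assoc, div_lt_iff₀ (by positivity)]
      nlinarith [le_abs_self s]
    nlinarith [mul_nonneg (hh i hi) (div_pos hu0 (by positivity : (0 : ℝ) < |s| + 1)).le]
  · exact ⟨β, hβ, fun i hi => hsu.trans (by simpa using hu i hi 0 le_rfl)⟩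

lemma exists_lt_condRelEntropy_add_dotProduct (hμ : 0 ≤ μ) (hp : p ∈ rowStochastic ℝ Ω) {s : ℝ}
    (hs : ∀ q ∈ absContKernels p, μ ᵥ* q = μ → s < condRelEntropy μ q p) :
    ∃ f : Ω → ℝ, ∀ q ∈ absContKernels p, s < condRelEntropy μ q p + (μ ᵥ* q - μ) ⬝ᵥ f := by
  have hsμ : (s, μ) ∉ entropyEpigraph μ p := fun ⟨q, hq, hqs, hμq⟩ => (hs q hq hμq).not_ge hqs
  obtain ⟨φ, u, hφs, hφA⟩ := geometric_hahn_banach_point_closed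
    (convex_entropyEpigraph hμ p) (isClosed_entropyEpigraph μ p) hsμ
  set ℓ : (Ω → ℝ) →ₗ[ℝ] ℝ := (φ : ℝ × (Ω → ℝ) →ₗ[ℝ] ℝ).comp (LinearMap.inr ℝ ℝ (Ω → ℝ))
  set w : Ω → ℝ := fun i => ℓ fun j => if i = j then 1 else 0
  have hφ : ∀ x ν, φ (x, ν) = x * φ (1, 0) + ν ⬝ᵥ w := by
    intro x ν
    rw [show (x, ν) = x • ((1 : ℝ), (0 : Ω → ℝ)) + ((0 : ℝ), ν) by simp, map_add, map_smul,
      smul_eq_mul]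
    exact congrArg _ (ℓ.pi_apply_eq_sum_univ ν)
  obtain ⟨c, hc, hsc⟩ := exists_pos_mul_lt_of_separated (K := absContKernels p)
    (h := fun q => condRelEntropy μ q p) (b := fun q => (μ ᵥ* q - μ) ⬝ᵥ w)
    (fun q hq => condRelEntropy_nonneg hμ hq.1 hp hq.2) (s := s) (β := φ (1, 0))
    (u := u - μ ⬝ᵥ w)
    (by linarith [hφ s μ]) fun q hq t ht => by
      have := hφA (condRelEntropy μ q p + t, μ ᵥ* q) ⟨q, hq, le_add_of_nonneg_right ht, rfl⟩
      rw [hφ] at this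
      rw [sub_dotProduct]
      linarith
  refine ⟨c⁻¹ • w, fun q hq => lt_of_mul_lt_mul_right ?_ hc.le⟩
  rw [dotProduct_smul, smul_eq_mul, add_mul, mul_comm c⁻¹, mul_assoc, inv_mul_cancel₀ hc.ne',
    mul_one]
  exact hsc q hq

theorem exists_stationary_condRelEntropy_le (hμ : 0 ≤ μ) (hp : p ∈ rowStochastic ℝ Ω) {s : ℝ}
    (hs : ∀ g, dvFunctional μ p g ≤ s) :
    ∃ q ∈ absContKernels p, μ ᵥ* q = μ ∧ condRelEntropy μ q p ≤ s := by
  by_contra! h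
  obtain ⟨f, hf⟩ := exists_lt_condRelEntropy_add_dotProduct hμ hp h
  have hlt := hf _ (gibbsKernel_mem_absContKernels hp (-f))
  have hle := hs (-f)
  rw [dvFunctional_eq_gibbsKernel hp, dotProduct_neg, ← neg_dotProduct, neg_sub] at hle
  linarith

theorem sInf_condRelEntropy_eq_sSup_dvFunctional (hμ : 0 ≤ μ) (hp : p ∈ rowStochastic ℝ Ω) :
    sInf {x : EReal | ∃ q ∈ absContKernels p, μ ᵥ* q = μ ∧ x = condRelEntropy μ q p} =
      sSup {x : EReal | ∃ g, x = dvFunctional μ p g} := by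
  apply le_antisymm
  · refine EReal.le_of_forall_lt_iff_le.1 fun z hz => ?_
    obtain ⟨q, hq, hμq, hqz⟩ := exists_stationary_condRelEntropy_le hμ hp fun g =>
      EReal.coe_le_coe_iff.1 <|
        (le_sSup (s := {x : EReal | ∃ g, x = dvFunctional μ p g}) ⟨g, rfl⟩).trans hz.le
    exact sInf_le_of_le ⟨q, hq, hμq, rfl⟩ (EReal.coe_le_coe_iff.2 hqz)
  · refine sSup_le ?_
    rintro _ ⟨g, rfl⟩
    refine le_sInf ?_
    rintro _ ⟨q, ⟨hq, hqp⟩, hμq, rfl⟩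
    exact EReal.coe_le_coe_iff.2 (dvFunctional_le_condRelEntropy hμ hp hq hqp hμq g)

end Kernels

section UniformKernel

variable {Ω R : Type*} [DecidableEq Ω] [Fintype R]

def uniformKernel (T : R → Ω → Ω) : Matrix Ω Ω ℝ :=
  fun ω ω' => (Fintype.card R : ℝ)⁻¹ * #{z | T z ω = ω'}

lemma uniformKernel_mulVec [Fintype Ω] (T : R → Ω → Ω) (φ : Ω → ℝ) (ω : Ω) :
    (uniformKernel T *ᵥ φ) ω = ∑ z, (Fintype.card R : ℝ)⁻¹ * φ (T z ω) := by
  rw [← sum_fiberwise' univ (fun z => T z ω) fun ω' => (Fintype.card R : ℝ)⁻¹ * φ ω']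
  refine sum_congr rfl fun ω' _ => ?_
  rw [sum_const, nsmul_eq_mul]
  simp only [uniformKernel]
  ring

variable [Nonempty R]

lemma uniformKernel_mem_rowStochastic [Fintype Ω] (T : R → Ω → Ω) :
    uniformKernel T ∈ rowStochastic ℝ Ω := by
  refine mem_rowStochastic.2 ⟨fun _ _ => by unfold uniformKernel; positivity, funext fun ω => ?_⟩
  rw [uniformKernel_mulVec, Pi.one_apply]
  simp [Fintype.card_ne_zero]

lemma uniformKernel_eq_zero_iff {T : R → Ω → Ω} {ω ω' : Ω} :
    uniformKernel T ω ω' = 0 ↔ ¬∃ z, T z ω = ω' := by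
  simp [uniformKernel, Fintype.card_ne_zero, filter_eq_empty_iff]

end UniformKernel

end DonskerVaradhan

end

open DonskerVaradhan

theorem stmt_17_general {Ω R : Type*} [Fintype Ω] [DecidableEq Ω] [Fintype R] [Nonempty R]
    (T : R → Ω → Ω) (μ : Ω → ℝ)
    (hμ0 : ∀ ω, 0 ≤ μ ω) :
    sInf {x : EReal | ∃ q : Ω → Ω → ℝ,
        (∀ ω ω', 0 ≤ q ω ω') ∧ (∀ ω, ∑ ω', q ω ω' = 1) ∧
        (∀ ω ω', q ω ω' ≠ 0 → ∃ z : R, T z ω = ω') ∧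
        (∀ ω', ∑ ω, μ ω * q ω ω' = μ ω') ∧
        x = ((∑ ω, μ ω * ∑ ω', q ω ω' *
              Real.log (q ω ω' / ((Fintype.card R : ℝ)⁻¹ *
                (Finset.univ.filter (fun z : R => T z ω = ω')).card)) : ℝ) : EReal)}
      = sSup {x : EReal | ∃ f : Ω → ℝ,
        x = (((∑ ω, μ ω * f ω) - ∑ ω, μ ω *
              Real.log (∑ z : R, (Fintype.card R : ℝ)⁻¹ *
                Real.exp (f (T z ω))) : ℝ) : EReal)} := by
  have hK : ∀ q : Matrix Ω Ω ℝ, q ∈ absContKernels (uniformKernel T) ↔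
      (∀ ω ω', 0 ≤ q ω ω') ∧ (∀ ω, ∑ ω', q ω ω' = 1) ∧
        ∀ ω ω', q ω ω' ≠ 0 → ∃ z : R, T z ω = ω' := by
    intro q
    simp only [absContKernels, Set.mem_inter_iff, SetLike.mem_coe, mem_rowStochastic_iff_sum,
      Set.mem_ofPred_eq, AbsCont, uniformKernel_eq_zero_iff, not_imp_comm, and_assoc]
  have hΦ : ∀ f, dvFunctional μ (uniformKernel T) f = (∑ ω, μ ω * f ω) - ∑ ω, μ ω *
      Real.log (∑ z : R, (Fintype.card R : ℝ)⁻¹ * Real.exp (f (T z ω))) := by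
    intro f
    simp only [dvFunctional, partitionFn, uniformKernel_mulVec]
    rfl
  have h := sInf_condRelEntropy_eq_sSup_dvFunctional (μ := μ) hμ0
    (uniformKernel_mem_rowStochastic T)
  simp only [hK, hΦ, and_assoc, funext_iff] at h
  exact h

/-- Donsker–Varadhan identity on a finite space: with the uniform kernel
`p(ω,ω') = |R|⁻¹ #{z : T_zω = ω'}`, for a probability vector `μ` on finite `Ω`,
`inf_{q : μq = μ} H(μ×q|μ×p) = sup_f { E^μ[f] − E^μ[log ∑_z |R|⁻¹ e^{f(T_zω)}] }`,
with the conventions encoded by taking `sInf`/`sSup` in `EReal`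
(`sInf ∅ = +∞`, unbounded suprema are `+∞`). -/
theorem stmt_17 {Ω R : Type*} [Fintype Ω] [DecidableEq Ω] [Fintype R] [Nonempty R]
    (T : R → Ω → Ω) (μ : Ω → ℝ)
    (hμ0 : ∀ ω, 0 ≤ μ ω) (hμ1 : ∑ ω, μ ω = 1) :
    sInf {x : EReal | ∃ q : Ω → Ω → ℝ,
        (∀ ω ω', 0 ≤ q ω ω') ∧ (∀ ω, ∑ ω', q ω ω' = 1) ∧
        (∀ ω ω', q ω ω' ≠ 0 → ∃ z : R, T z ω = ω') ∧
        (∀ ω', ∑ ω, μ ω * q ω ω' = μ ω') ∧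
        x = ((∑ ω, μ ω * ∑ ω', q ω ω' *
              Real.log (q ω ω' / ((Fintype.card R : ℝ)⁻¹ *
                (Finset.univ.filter (fun z : R => T z ω = ω')).card)) : ℝ) : EReal)}
      = sSup {x : EReal | ∃ f : Ω → ℝ,
        x = (((∑ ω, μ ω * f ω) - ∑ ω, μ ω *
              Real.log (∑ z : R, (Fintype.card R : ℝ)⁻¹ *
                Real.exp (f (T z ω))) : ℝ) : EReal)} :=
  stmt_17_general T μ hμ0
end
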